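/- Let (Ω, 𝔉, μ) be a probability space, let T : Ω → Ω be a measurable map preserving μ (the pushforward of μ under T equals μ), let r : Ω → ℝ and H : Ω → ℝ be measurable with r ∘ T = −r and H ∘ T = H. Then the conditional expectation of the sign of r given the σ-algebra generated by H vanishes: μ[ sgn ∘ r | σ(H) ] = 0 almost everywhere, where sgn x = 1 for x > 0, −1 for x < 0, and 0 for x = 0. -/

import Mathlib

/-!
Conditioning on `σ(H)` only sees sets of the form `H ⁻¹' B`, and these are `T`-invariant because
`H ∘ T = H`. Since `T` preserves `μ`, integrating `sgn ∘ r` over such a set gives the same value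
as integrating `sgn ∘ r ∘ T = -(sgn ∘ r)` over it, so every such integral vanishes, and by
uniqueness of the conditional expectation so does `μ[sgn ∘ r | σ(H)]`.
-/

open MeasureTheory

section

variable {Ω E : Type*} [NormedAddCommGroup E] [NormedSpace ℝ E]

theorem preimage_eq_self_of_measurableSet_comap {β : Type*} [MeasurableSpace β]
    {H : Ω → β} {T : Ω → Ω} (hHT : H ∘ T = H) {s : Set Ω}
    (hs : MeasurableSet[MeasurableSpace.comap H ‹_›] s) : T ⁻¹' s = s := by
  obtain ⟨B, -, rfl⟩ := hs
  rw [← Set.preimage_comp, hHT]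

namespace MeasureTheory.MeasurePreserving

variable {m m₀ : MeasurableSpace Ω} {μ : Measure Ω} {T : Ω → Ω} {f : Ω → E}

theorem integral_eq_zero_of_comp_eq_neg (hT : MeasurePreserving T μ μ)
    (hf : AEStronglyMeasurable f μ) (hfT : f ∘ T = -f) : ∫ x, f x ∂μ = 0 := by
  have hcomp : ∫ x, f (T x) ∂μ = ∫ x, f x ∂μ := by
    rw [← integral_map hT.aemeasurable (by rwa [hT.map_eq]), hT.map_eq]
  have hneg : ∫ x, f x ∂μ = -∫ x, f x ∂μ := by
    rw [← integral_neg, ← hcomp]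
    exact integral_congr_ae (.of_forall (congrFun hfT))
  rwa [eq_neg_iff_add_eq_zero, ← two_smul ℝ, smul_eq_zero, or_iff_right two_ne_zero] at hneg

theorem setIntegral_eq_zero_of_comp_eq_neg (hT : MeasurePreserving T μ μ)
    (hf : AEStronglyMeasurable f μ) (hfT : f ∘ T = -f) {s : Set Ω} (hs : MeasurableSet s)
    (hTs : T ⁻¹' s = s) : ∫ x in s, f x ∂μ = 0 := by
  have hT_s : MeasurePreserving T (μ.restrict s) (μ.restrict s) := by
    simpa only [hTs] using hT.restrict_preimage hs
  exact hT_s.integral_eq_zero_of_comp_eq_neg hf.restrict hfT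

theorem condExp_ae_eq_zero_of_comp_eq_neg [CompleteSpace E]
    (hT : MeasurePreserving T μ μ) (hinv : ∀ s, MeasurableSet[m] s → T ⁻¹' s = s)
    (hfT : f ∘ T = -f) : μ[f | m] =ᵐ[μ] 0 := by
  -- outside the integrable, σ-finite case `μ[f | m]` is `0` by definition
  by_cases hm : m ≤ m₀
  swap
  · rw [condExp_of_not_le hm]
  by_cases hσ : SigmaFinite (μ.trim hm)
  swap
  · rw [condExp_of_not_sigmaFinite hm hσ]
  by_cases hf : Integrable f μ
  swap
  · rw [condExp_of_not_integrable hf]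
  refine (ae_eq_condExp_of_forall_setIntegral_eq hm hf (fun _ _ _ => integrableOn_zero)
    (fun s hs _ => ?_) aestronglyMeasurable_const).symm
  rw [hT.setIntegral_eq_zero_of_comp_eq_neg hf.1 hfT (hm s hs) (hinv s hs), integral_zero]

end MeasureTheory.MeasurePreserving

end

theorem condexp_sign_return_eq_zero_general
    {Ω : Type*} [MeasurableSpace Ω] (μ : Measure Ω)
    (T : Ω → Ω) (hT : Measurable T) (hTμ : Measure.map T μ = μ)
    (r H : Ω → ℝ)
    (hrT : r ∘ T = -r) (hHT : H ∘ T = H) :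
    μ[fun ω => Real.sign (r ω)|MeasurableSpace.comap H Real.measurableSpace]
      =ᵐ[μ] 0 := by
  have hsign : (Real.sign ∘ r) ∘ T = -(Real.sign ∘ r) := by
    funext ω
    have hrω := congrFun hrT ω
    simp only [Function.comp_apply, Pi.neg_apply] at hrω ⊢
    rw [hrω, Real.sign_neg]
  exact MeasurePreserving.condExp_ae_eq_zero_of_comp_eq_neg ⟨hT, hTμ⟩
    (fun _ hs => preimage_eq_self_of_measurableSet_comap hHT hs) hsign

/-- **Directional unpredictability.**
If `T` preserves the probability measure `μ`, negates the return `r`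
(`r ∘ T = -r`) and fixes the entropy `H` (`H ∘ T = H`), then the conditional
expectation of `sgn ∘ r` given the σ-algebra generated by `H` vanishes almost
everywhere, where `sgn x = 1` for `x > 0`, `-1` for `x < 0`, and `0` for
`x = 0` (this is `Real.sign`). -/
theorem condexp_sign_return_eq_zero
    {Ω : Type*} [MeasurableSpace Ω] (μ : Measure Ω) [IsProbabilityMeasure μ]
    (T : Ω → Ω) (hT : Measurable T) (hTμ : Measure.map T μ = μ)
    (r H : Ω → ℝ) (hr : Measurable r) (hH : Measurable H)
    (hrT : r ∘ T = -r) (hHT : H ∘ T = H) :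
    μ[fun ω => Real.sign (r ω)|MeasurableSpace.comap H Real.measurableSpace]
      =ᵐ[μ] 0 :=
  condexp_sign_return_eq_zero_general μ T hT hTμ r H hrT hHT
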